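/- arXiv:2101.01443 — 2 statements merged into one kernel-verified Lean document; each statement's English description precedes it below -/
import Mathlib

section
/- (Corollary 2, Eq. (3.7).) Let X be a complex Banach space, t₀ ∈ ℝ, and U : ℝ → B(X) differentiable at t₀ with derivative U′, such that U(t₀) is invertible in B(X) and U(t₀) commutes with U′. Let η ∈ ℂ with η ≠ 0, 1 be such that 1 − η⁻¹U(t) is invertible in B(X) for all t, write I_η(t) := (1 − η⁻¹U(t))⁻¹ and I_η := I_η(t₀), and let D ∈ B(X) be the derivative of t ↦ I_η(t) at t₀. Set ν := η/(1−η), and assume I_η² − I_η and I_η + ν·1 are invertible in B(X). Then the infinitesimal generator A := U′ ∘ U(t₀)⁻¹ satisfies A = (I_η² − I_η)⁻¹ ∘ (I_η + ν·1) ∘ ((I_η + ν·1)⁻¹ ∘ D). -/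
/-! Write `B(t) = 1 - η⁻¹ U(t)`, so that `Iη = B(t₀)⁻¹`. Differentiating `B(t) I(t) = 1` gives
`D = η⁻¹ Iη U' Iη`, while `Iη - 1 = Iη (1 - B(t₀)) = η⁻¹ Iη U(t₀)` gives
`Iη² - Iη = η⁻¹ Iη² U(t₀)`. Since `U'` commutes with `U(t₀)`, hence with `B(t₀)` and `Iη`,
`(Iη² - Iη) U' U(t₀)⁻¹ = η⁻¹ Iη² U' = D`, and the factor `(Iη + ν)(Iη + ν)⁻¹` is the identity. -/

open Filter Topology

theorem HasDerivAt.eq_neg_ringInverse_mul_mul_ringInverse {𝕜 R : Type*} [NontriviallyNormedField 𝕜]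
    [NormedRing R] [NormedAlgebra 𝕜 R] {B : 𝕜 → R} {B' D : R} {t₀ : 𝕜}
    (hB : HasDerivAt B B' t₀) (hunit : ∀ᶠ t in 𝓝 t₀, IsUnit (B t))
    (hD : HasDerivAt (fun t => Ring.inverse (B t)) D t₀) :
    D = -(Ring.inverse (B t₀) * B' * Ring.inverse (B t₀)) := by
  have hconst : HasDerivAt (fun t => B t * Ring.inverse (B t)) 0 t₀ :=
    (hasDerivAt_const t₀ 1).congr_of_eventuallyEq
      (hunit.mono fun t ht => Ring.mul_inverse_cancel _ ht)
  have hsum : B' * Ring.inverse (B t₀) + B t₀ * D = 0 := (hB.fun_mul hD).unique hconst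
  rw [← Ring.inverse_mul_cancel_left _ D hunit.self_of_nhds, eq_neg_of_add_eq_zero_right hsum]
  noncomm_ring

theorem Commute.ringInverse_left {M₀ : Type*} [MonoidWithZero M₀] {a b : M₀}
    (h : Commute a b) : Commute (Ring.inverse a) b := by
  by_cases ha : IsUnit a
  · rw [Ring.inverse_of_isUnit ha]
    exact Commute.units_inv_left h
  · rw [Ring.inverse_non_unit _ ha]
    exact Commute.zero_left b

namespace Ring

variable {𝕜 R : Type*} [CommRing 𝕜] [Ring R] [Algebra 𝕜 R] {c : 𝕜} {u u' : R}

theorem inverse_one_sub_smul_sub_one (hB : IsUnit (1 - c • u)) :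
    Ring.inverse (1 - c • u) - 1 = c • (Ring.inverse (1 - c • u) * u) := by
  calc Ring.inverse (1 - c • u) - 1
      = Ring.inverse (1 - c • u) - Ring.inverse (1 - c • u) * (1 - c • u) := by
        rw [Ring.inverse_mul_cancel _ hB]
    _ = c • (Ring.inverse (1 - c • u) * u) := by rw [mul_sub, mul_one, mul_smul_comm]; abel

theorem inverse_one_sub_smul_sq_sub_self_mul (hB : IsUnit (1 - c • u)) (hu : IsUnit u)
    (h : Commute u u') :
    (Ring.inverse (1 - c • u) ^ 2 - Ring.inverse (1 - c • u)) * (u' * Ring.inverse u) =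
      c • (Ring.inverse (1 - c • u) * u' * Ring.inverse (1 - c • u)) := by
  set I := Ring.inverse (1 - c • u)
  have hsub : I - 1 = c • (I * u) := inverse_one_sub_smul_sub_one hB
  have hIu' : Commute I u' := ((Commute.one_left u').sub_left (h.smul_left c)).ringInverse_left
  calc (I ^ 2 - I) * (u' * Ring.inverse u) = c • (I * I * (u * u' * Ring.inverse u)) := by
        rw [sq, ← mul_sub_one, hsub, mul_smul_comm, smul_mul_assoc]
        noncomm_ring
    _ = c • (I * (I * u')) := by rw [h.eq, Ring.mul_inverse_cancel_right _ _ hu, mul_assoc]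
    _ = c • (I * u' * I) := by rw [mul_assoc, ← hIu'.eq]

end Ring

theorem stmt_6_general {X : Type*} [NormedAddCommGroup X] [NormedSpace ℂ X]
    (t₀ : ℝ) (U : ℝ → X →L[ℂ] X) (U' : X →L[ℂ] X)
    (hU : HasDerivAt U U' t₀) (hUinv : IsUnit (U t₀))
    (hcomm : U t₀ * U' = U' * U t₀)
    (η : ℂ)
    (hres : ∀ t : ℝ, IsUnit (1 - η⁻¹ • U t))
    (Iη : X →L[ℂ] X) (hIη : Iη = Ring.inverse (1 - η⁻¹ • U t₀))
    (D : X →L[ℂ] X)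
    (hD : HasDerivAt (fun t => Ring.inverse (1 - η⁻¹ • U t)) D t₀)
    (ν : ℂ)
    (h1 : IsUnit (Iη ^ 2 - Iη))
    (h2 : IsUnit (Iη + ν • 1)) :
    U' * Ring.inverse (U t₀) =
      Ring.inverse (Iη ^ 2 - Iη) * (Iη + ν • 1) * (Ring.inverse (Iη + ν • 1) * D) := by
  have hB : HasDerivAt (fun t => 1 - η⁻¹ • U t) (-(η⁻¹ • U')) t₀ := by
    simpa using (hU.const_smul η⁻¹).const_sub 1
  have hDval : D = η⁻¹ • (Iη * U' * Iη) := by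
    rw [hB.eq_neg_ringInverse_mul_mul_ringInverse (.of_forall hres) hD, hIη]
    simp only [mul_neg, neg_mul, neg_neg, mul_smul_comm, smul_mul_assoc]
  rw [mul_assoc, Ring.mul_inverse_cancel_left _ _ h2, eq_comm,
    Ring.inverse_mul_eq_iff_eq_mul _ _ _ h1, hDval, hIη]
  exact (Ring.inverse_one_sub_smul_sq_sub_self_mul (hres t₀) hUinv hcomm).symm

/-- Corollary 2, Eq. (3.7): with `ν = η/(1-η)`, the infinitesimal generator
`A = U' ∘ U(t₀)⁻¹` is represented as
`(Iη² - Iη)⁻¹ (Iη + ν) ((Iη + ν)⁻¹ D)`. -/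
theorem stmt_6 {X : Type*} [NormedAddCommGroup X] [NormedSpace ℂ X] [CompleteSpace X]
    (t₀ : ℝ) (U : ℝ → X →L[ℂ] X) (U' : X →L[ℂ] X)
    (hU : HasDerivAt U U' t₀) (hUinv : IsUnit (U t₀))
    (hcomm : U t₀ * U' = U' * U t₀)
    (η : ℂ) (hη0 : η ≠ 0) (hη1 : η ≠ 1)
    (hres : ∀ t : ℝ, IsUnit (1 - η⁻¹ • U t))
    (Iη : X →L[ℂ] X) (hIη : Iη = Ring.inverse (1 - η⁻¹ • U t₀))
    (D : X →L[ℂ] X)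
    (hD : HasDerivAt (fun t => Ring.inverse (1 - η⁻¹ • U t)) D t₀)
    (ν : ℂ) (hν : ν = η / (1 - η))
    (h1 : IsUnit (Iη ^ 2 - Iη))
    (h2 : IsUnit (Iη + ν • 1)) :
    U' * Ring.inverse (U t₀) =
      Ring.inverse (Iη ^ 2 - Iη) * (Iη + ν • 1) * (Ring.inverse (Iη + ν • 1) * D) :=
  stmt_6_general t₀ U U' hU hUinv hcomm η hres Iη hIη D hD ν h1 h2
end

section
/- (Corollary 4, Eq. (3.11).) Let X be a complex Banach space, t₀ ∈ ℝ, and U : ℝ → B(X) differentiable at t₀ with derivative U′, such that U(t₀) is invertible in B(X) and U(t₀) commutes with U′. Let η ∈ ℂ with η ≠ 0, 1 be such that 1 − η⁻¹U(t) is invertible in B(X) for all t, write I_η := (1 − η⁻¹U(t₀))⁻¹, let D ∈ B(X) be the derivative of t ↦ (1 − η⁻¹U(t))⁻¹ at t₀, and assume I_η − 1 is invertible in B(X). Set ν := η/(1−η), and let a′ ∈ B(X) be an alternative infinitesimal generator: there exists a ∈ B(X) with exp(a) = I_η + ν·1, satisfying the chain-rule relation a′ ∘ exp(a) = D, and such that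 a′ commutes with I_η. Then the operator W := exp(a) − (2ν+1)·1 + (ν²+ν)·exp(−a) is invertible in B(X), and the infinitesimal generator A := U′ ∘ U(t₀)⁻¹ satisfies A = W⁻¹ ∘ a′. -/
/-!
Since `exp a * exp (-a) = 1`, the operator `W` factors as
`(exp a - ν) (exp a - ν - 1) exp (-a) = Iη (Iη - 1) exp (-a)`, a product of units.
Differentiating the resolvent gives `D = η⁻¹ Iη U' Iη`, so `a' = D exp (-a)`; the resolvent
identity `η⁻¹ Iη U(t₀) = Iη - 1`, together with the commutativity of `U(t₀)`, `U'`, `Iη` and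
`exp (-a)`, turns `a' U(t₀)` into `W U'`.
-/

open NormedSpace
open scoped Ring

theorem Commute.ringInverse_right {M₀ : Type*} [MonoidWithZero M₀] {a b : M₀} (h : Commute a b) :
    Commute a b⁻¹ʳ := by
  by_cases hb : IsUnit b
  · obtain ⟨u, rfl⟩ := hb
    rw [Ring.inverse_unit]
    exact h.units_inv_right
  · rw [Ring.inverse_non_unit b hb]
    exact Commute.zero_right a

section Algebra

variable {𝕜 R : Type*} [CommRing 𝕜] [Ring R] [Algebra 𝕜 R]

theorem sub_smul_one_add_smul_eq_mul_mul {E F : R} (hEF : E * F = 1) (ν : 𝕜) :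
    E - (2 * ν + 1) • 1 + (ν ^ 2 + ν) • F = (E - ν • 1) * (E - (ν + 1) • 1) * F := by
  have hE : E = E * E * F := by rw [mul_assoc, hEF, mul_one]
  conv_lhs => rw [hE, ← hEF, ← one_mul F]
  simp only [sub_mul, mul_sub, smul_mul_assoc, mul_smul_comm, one_mul, mul_one]
  module

theorem Commute.ringInverse_one_sub_smul_right {S T : R} (h : Commute S T) (c : 𝕜) :
    Commute S (1 - c • T)⁻¹ʳ :=
  ((Commute.one_right S).sub_right (h.smul_right c)).ringInverse_right

theorem smul_inverse_one_sub_smul_mul {c : 𝕜} {T : R} (h : IsUnit (1 - c • T)) :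
    c • ((1 - c • T)⁻¹ʳ * T) = (1 - c • T)⁻¹ʳ - 1 := by
  have hinv := Ring.inverse_mul_cancel _ h
  rw [mul_sub, mul_one, mul_smul_comm] at hinv
  rw [← sub_sub_cancel (1 - c • T)⁻¹ʳ (c • _), hinv]

theorem smul_inverse_one_sub_smul_mul_mul {c : 𝕜} {T T' F : R} (hT : IsUnit (1 - c • T))
    (hTT' : Commute T T') (hFT : Commute F T) (hFT' : Commute F T') :
    c • ((1 - c • T)⁻¹ʳ * T' * (1 - c • T)⁻¹ʳ) * F * T =
      (1 - c • T)⁻¹ʳ * ((1 - c • T)⁻¹ʳ - 1) * F * T' := by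
  set I := (1 - c • T)⁻¹ʳ
  have hIT' : Commute T' (I - 1) :=
    (hTT'.symm.ringInverse_one_sub_smul_right c).sub_right (Commute.one_right T')
  calc c • (I * T' * I) * F * T = I * T' * (c • (I * T)) * F := by
        rw [mul_assoc _ F, hFT.eq]; simp only [smul_mul_assoc, mul_smul_comm, mul_assoc]
    _ = I * (I - 1) * T' * F := by
        rw [smul_inverse_one_sub_smul_mul hT, mul_assoc I T', hIT'.eq]
        simp only [mul_assoc]
    _ = I * (I - 1) * F * T' := by rw [mul_assoc _ T', ← hFT'.eq]; simp only [mul_assoc]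

end Algebra

theorem HasDerivAt.ringInverse {𝕜 R : Type*} [NontriviallyNormedField 𝕜] [NormedRing R]
    [NormedAlgebra 𝕜 R] [HasSummableGeomSeries R] {f : 𝕜 → R} {f' : R} {x : 𝕜}
    (hf : HasDerivAt f f' x) (hx : IsUnit (f x)) :
    HasDerivAt (fun t => (f t)⁻¹ʳ) (-((f x)⁻¹ʳ * f' * (f x)⁻¹ʳ)) x := by
  obtain ⟨u, hu⟩ := hx
  have hinv := hasFDerivAt_ringInverse (𝕜 := 𝕜) u
  rw [hu] at hinv
  simpa [← hu, Function.comp_def] using hinv.comp_hasDerivAt x hf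

theorem stmt_9_general {X : Type*} [NormedAddCommGroup X] [NormedSpace ℂ X] [CompleteSpace X]
    (t₀ : ℝ) (U : ℝ → X →L[ℂ] X) (U' : X →L[ℂ] X)
    (hU : HasDerivAt U U' t₀) (hUinv : IsUnit (U t₀))
    (hcomm : U t₀ * U' = U' * U t₀)
    (η : ℂ)
    (hres : ∀ t : ℝ, IsUnit (1 - η⁻¹ • U t))
    (Iη : X →L[ℂ] X) (hIη : Iη = Ring.inverse (1 - η⁻¹ • U t₀))
    (D : X →L[ℂ] X)
    (hD : HasDerivAt (fun t => Ring.inverse (1 - η⁻¹ • U t)) D t₀)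
    (h1 : IsUnit (Iη - 1))
    (ν : ℂ)
    (a a' : X →L[ℂ] X)
    (he : NormedSpace.exp a = Iη + ν • 1)
    (hc : a' * NormedSpace.exp a = D) :
    IsUnit (NormedSpace.exp a - (2 * ν + 1) • 1 + (ν ^ 2 + ν) • NormedSpace.exp (-a)) ∧
    U' * Ring.inverse (U t₀) =
      Ring.inverse
        (NormedSpace.exp a - (2 * ν + 1) • 1 + (ν ^ 2 + ν) • NormedSpace.exp (-a)) * a' := by
  -- the exponential lemmas are stated for normed `ℚ`-algebras
  let : NormedAlgebra ℚ (X →L[ℂ] X) := .restrictScalars ℚ ℂ (X →L[ℂ] X)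
  have hexp : exp a * exp (-a) = 1 := by
    rw [← Ring.inverse_exp]; exact Ring.mul_inverse_cancel _ (isUnit_exp a)
  have hW : exp a - (2 * ν + 1) • 1 + (ν ^ 2 + ν) • exp (-a) = Iη * (Iη - 1) * exp (-a) := by
    rw [sub_smul_one_add_smul_eq_mul_mul hexp, he, add_smul, one_smul]
    congr 2 <;> abel
  have hWunit : IsUnit (Iη * (Iη - 1) * exp (-a)) := by
    rw [hIη] at h1 ⊢
    exact ((hres t₀).ringInverse.mul h1).mul (isUnit_exp (-a))
  have hDval : D = η⁻¹ • (Iη * U' * Iη) := by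
    refine hD.unique ?_
    simpa [hIη] using (hU.const_smul η⁻¹).const_sub 1 |>.ringInverse (hres t₀)
  have hexp_neg : exp (-a) = (Iη + ν • 1)⁻¹ʳ := by rw [← he, Ring.inverse_exp]
  have hcomm_exp_neg {S : X →L[ℂ] X} (hS : Commute S (U t₀)) : Commute (exp (-a)) S := by
    rw [hexp_neg, hIη]
    exact ((hS.ringInverse_one_sub_smul_right η⁻¹).add_right
      ((Commute.one_right S).smul_right ν)).ringInverse_right.symm
  have ha'U : a' * U t₀ = Iη * (Iη - 1) * exp (-a) * U' := by
    rw [hIη, ← smul_inverse_one_sub_smul_mul_mul (hres t₀) hcomm (hcomm_exp_neg (Commute.refl _))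
      (hcomm_exp_neg (Commute.symm hcomm)), ← hIη, ← hDval, ← hc, mul_assoc a', hexp, mul_one]
  rw [hW]
  refine ⟨hWunit, ((Ring.inverse_mul_eq_iff_eq_mul _ _ _ hWunit).mpr ?_).symm⟩
  rw [← mul_assoc, ← ha'U, Ring.mul_inverse_cancel_right _ _ hUinv]

/-- Corollary 4, Eq. (3.11): with `ν = η/(1-η)` and alternative infinitesimal
generator `a'` (with `exp a = Iη + ν 1`, `a' * exp a = D`, `a'` commuting with `Iη`), the
operator `W = exp a - (2ν+1) 1 + (ν²+ν) exp(-a)` is invertible and the infinitesimal generator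
`A = U' ∘ U(t₀)⁻¹` satisfies `A = W⁻¹ a'`. -/
theorem stmt_9 {X : Type*} [NormedAddCommGroup X] [NormedSpace ℂ X] [CompleteSpace X]
    (t₀ : ℝ) (U : ℝ → X →L[ℂ] X) (U' : X →L[ℂ] X)
    (hU : HasDerivAt U U' t₀) (hUinv : IsUnit (U t₀))
    (hcomm : U t₀ * U' = U' * U t₀)
    (η : ℂ) (hη0 : η ≠ 0) (hη1 : η ≠ 1)
    (hres : ∀ t : ℝ, IsUnit (1 - η⁻¹ • U t))
    (Iη : X →L[ℂ] X) (hIη : Iη = Ring.inverse (1 - η⁻¹ • U t₀))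
    (D : X →L[ℂ] X)
    (hD : HasDerivAt (fun t => Ring.inverse (1 - η⁻¹ • U t)) D t₀)
    (h1 : IsUnit (Iη - 1))
    (ν : ℂ) (hν : ν = η / (1 - η))
    (a a' : X →L[ℂ] X)
    (he : NormedSpace.exp a = Iη + ν • 1)
    (hc : a' * NormedSpace.exp a = D)
    (hca : a' * Iη = Iη * a') :
    IsUnit (NormedSpace.exp a - (2 * ν + 1) • 1 + (ν ^ 2 + ν) • NormedSpace.exp (-a)) ∧
    U' * Ring.inverse (U t₀) =
      Ring.inverse
        (NormedSpace.exp a - (2 * ν + 1) • 1 + (ν ^ 2 + ν) • NormedSpace.exp (-a)) * a' :=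
  stmt_9_general t₀ U U' hU hUinv hcomm η hres Iη hIη D hD h1 ν a a' he hc
end
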